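/- arXiv:0908.2583 — 3 statements merged into one kernel-verified Lean document; each statement's English description precedes it below -/
import Mathlib

section
/- Let G be a finite group, p a prime dividing |G|, and P a Sylow p-subgroup of G. If G = ⟨ N_G(Y) : Y a nontrivial subgroup of P ⟩, then the commuting graph Γ_p on the set of elements of G of order p is connected. -/
open SimpleGraph

/-- The commuting graph on a subset `X` of a group `G`: vertices are the elements of `X`,
and two distinct vertices are adjacent iff they commute. -/
def commGraph {G : Type*} [Group G] (X : Set G) : SimpleGraph X where
  Adj a b := a ≠ b ∧ (a : G) * (b : G) = (b : G) * (a : G)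
  symm := ⟨fun a b h => ⟨h.1.symm, h.2.symm⟩⟩
  loopless := ⟨fun a h => h.1 rfl⟩

/-- The connected component of `x` in the commuting graph on `X`, viewed as a subset of `G`. -/
def compSet {G : Type*} [Group G] (X : Set G) (x : G) (hx : x ∈ X) : Set G :=
  {y : G | ∃ hy : y ∈ X, (commGraph X).Reachable ⟨x, hx⟩ ⟨y, hy⟩}

/-- The stabilizer `H_x` in `G` of the connected component of `x` in the commuting graph on `X`,
under the conjugation action. -/
def conjStab {G : Type*} [Group G] (X : Set G) (x : G) (hx : x ∈ X) : Set G :=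
  {g : G | (fun y => g⁻¹ * y * g) '' compSet X x hx = compSet X x hx}

/-!
Choose `z` of order `p` in the centre of `P`. Conjugation acts on the commuting graph by
automorphisms, so the elements `g` for which `g z g⁻¹` lies in the component of `z` form a
subgroup `H`. If `1 ≠ Y ≤ P` and `g ∈ N_G(Y)`, pick `y ∈ Y` of order `p`: both `y` and `g y g⁻¹`
lie in `P` and so commute with `z`, whence `g z g⁻¹ ~ g y g⁻¹ ~ z`. Thus the normalizers lie in
`H`, so `H = G`. Finally every element of order `p` lies in a conjugate `g P g⁻¹` of `P`, hence
commutes with `g z g⁻¹`, which is in the component of `z`.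
-/

open Pointwise

section
variable {G : Type*} [Group G]

lemma commGraph.reachable_of_commute {X : Set G} {u v : X} (h : Commute (u : G) v) :
    (commGraph X).Reachable u v := by
  by_cases huv : u = v
  · exact huv ▸ Reachable.refl u
  · exact Adj.reachable ⟨huv, h⟩

def commGraph.mulAutToIso (n : ℕ) :
    MulAut G →* (commGraph {x : G | orderOf x = n} ≃g commGraph {x : G | orderOf x = n}) where
  toFun f :=
    { toEquiv := f.toEquiv.subtypeEquiv fun x => by simp [MulEquiv.orderOf_eq]
      map_rel_iff' := by
        intro u v
        simp [commGraph, ← map_mul, Subtype.ext_iff] }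
  map_one' := by ext; rfl
  map_mul' _ _ := by ext; rfl

def commGraph.conjToIso (n : ℕ) :
    G →* (commGraph {x : G | orderOf x = n} ≃g commGraph {x : G | orderOf x = n}) :=
  (commGraph.mulAutToIso n).comp MulAut.conj

@[simp]
lemma commGraph.coe_conjToIso_apply (n : ℕ) (g : G) (u : {x : G | orderOf x = n}) :
    (commGraph.conjToIso n g u : G) = g * u * g⁻¹ := rfl

end

def SimpleGraph.componentStabilizer {V : Type*} (Γ : SimpleGraph V) (v : V) :
    Subgroup (Γ ≃g Γ) where
  carrier := {f | Γ.Reachable v (f v)}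
  one_mem' := Reachable.refl v
  mul_mem' {f g} hf hg := hf.trans (hg.map f.toHom)
  inv_mem' {f} hf := by
    simpa using (hf.map (f⁻¹).toHom).symm

section
variable {G : Type*} [Group G] {p : ℕ}

lemma IsPGroup.exists_mem_orderOf_eq [Finite G] [Fact p.Prime] {Y : Subgroup G}
    (hY : IsPGroup p Y) (hne : Y ≠ ⊥) : ∃ y ∈ Y, orderOf y = p := by
  have hdvd : p ∣ Nat.card Y :=
    hY.card_eq_or_dvd.resolve_left (by rwa [Subgroup.card_eq_one])
  obtain ⟨y, hy⟩ := exists_prime_orderOf_dvd_card' p hdvd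
  exact ⟨y, y.2, by rwa [Subgroup.orderOf_coe]⟩

lemma Sylow.exists_orderOf_eq_forall_commute [Finite G] [Fact p.Prime] (P : Sylow p G)
    (hdvd : p ∣ Nat.card G) : ∃ z : G, orderOf z = p ∧ ∀ y ∈ (P : Subgroup G), Commute z y := by
  have : Nontrivial P := Subgroup.nontrivial_iff_ne_bot _ |>.mpr (P.ne_bot_of_dvd_card hdvd)
  obtain ⟨z, hz, hzp⟩ := (P.2.to_subgroup (Subgroup.center P)).exists_mem_orderOf_eq
    P.2.bot_lt_center.ne'
  refine ⟨z, by rwa [Subgroup.orderOf_coe], fun y hy => ?_⟩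
  exact congrArg Subtype.val (Subgroup.mem_center_iff.mp hz ⟨y, hy⟩).symm

lemma Sylow.exists_reachable_conjToIso [Finite G] [Fact p.Prime] (P : Sylow p G)
    {z : {x : G | orderOf x = p}} (hz : ∀ y ∈ (P : Subgroup G), Commute (z : G) y)
    (w : {x : G | orderOf x = p}) :
    ∃ g : G, (commGraph {x : G | orderOf x = p}).Reachable (commGraph.conjToIso p g z) w := by
  have hw : IsPGroup p (Subgroup.zpowers (w : G)) :=
    IsPGroup.of_card (n := 1) (by rw [Nat.card_zpowers, pow_one]; exact w.2)
  obtain ⟨Q, hQ⟩ := hw.exists_le_sylow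
  obtain ⟨g, rfl⟩ := MulAction.exists_smul_eq G P Q
  have hwP : g⁻¹ * w * g ∈ (P : Subgroup G) := by
    have := hQ (Subgroup.mem_zpowers (w : G))
    rw [Sylow.coe_subgroup_smul, Subgroup.mem_pointwise_smul_iff_inv_smul_mem] at this
    simpa [MulAut.smul_def, MulAut.conj_apply] using this
  refine ⟨g, ?_⟩
  have hzw : (commGraph _).Reachable z (commGraph.conjToIso p g⁻¹ w) :=
    commGraph.reachable_of_commute (by rw [commGraph.coe_conjToIso_apply, inv_inv]; exact hz _ hwP)
  simpa [← RelIso.mul_apply, ← map_mul] using hzw.map (commGraph.conjToIso p g).toHom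

lemma normalizer_le_comap_componentStabilizer {P Y : Subgroup G} {z : {x : G | orderOf x = p}}
    (hz : ∀ y ∈ P, Commute (z : G) y) (hYP : Y ≤ P) {y : G} (hyY : y ∈ Y) (hy : orderOf y = p) :
    Subgroup.normalizer (Y : Set G) ≤
      ((commGraph _).componentStabilizer z).comap (commGraph.conjToIso p) := by
  intro g hg
  let y' : {x : G | orderOf x = p} := ⟨y, hy⟩
  have hgy : g * y * g⁻¹ ∈ Y := (Subgroup.mem_normalizer_iff.mp hg y).mp hyY
  have hzy : (commGraph _).Reachable z y' := commGraph.reachable_of_commute (hz y (hYP hyY))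
  have hzgy : (commGraph _).Reachable z (commGraph.conjToIso p g y') :=
    commGraph.reachable_of_commute (hz _ (hYP hgy))
  exact hzgy.trans (hzy.map (commGraph.conjToIso p g).toHom).symm
end

/-- Let `G` be a finite group, `p` a prime dividing `|G|`, and `P` a Sylow `p`-subgroup.
If `G` is generated by the normalizers of the nontrivial subgroups of `P`, then the
commuting graph on the set of elements of `G` of order `p` is connected. -/
theorem commGraph_connected_of_normalizers_generate
    {G : Type*} [Group G] [Finite G] (p : ℕ) (hp : p.Prime)
    (hdvd : p ∣ Nat.card G) (P : Sylow p G)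
    (hgen : (⨆ Y ∈ {Y : Subgroup G | Y ≠ ⊥ ∧ Y ≤ (P : Subgroup G)}, Subgroup.normalizer (Y : Set G)) = ⊤) :
    (commGraph {x : G | orderOf x = p}).Connected := by
  have := Fact.mk hp
  obtain ⟨z, hzp, hzP⟩ := P.exists_orderOf_eq_forall_commute hdvd
  let z' : {x : G | orderOf x = p} := ⟨z, hzp⟩
  have hstab : ((commGraph _).componentStabilizer z').comap (commGraph.conjToIso p) = ⊤ := by
    refine top_le_iff.mp (hgen ▸ iSup₂_le fun Y hY => ?_)
    obtain ⟨y, hyY, hy⟩ := (P.2.to_le hY.2).exists_mem_orderOf_eq hY.1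
    exact normalizer_le_comap_componentStabilizer hzP hY.2 hyY hy
  have hreach (w : {x : G | orderOf x = p}) : (commGraph _).Reachable z' w := by
    obtain ⟨g, hg⟩ := P.exists_reachable_conjToIso (z := z') hzP w
    have hg' : g ∈ ((commGraph _).componentStabilizer z').comap (commGraph.conjToIso p) :=
      hstab ▸ Subgroup.mem_top g
    exact hg'.trans hg
  have : Nonempty {x : G | orderOf x = p} := ⟨z'⟩
  exact ⟨fun u v => (hreach u).symm.trans (hreach v)⟩
end

section
/- Let G be a finite group and p a prime. Suppose A and B are subgroups of G such that G = ⟨A, B⟩, the intersection A ∩ B contains an element of order p, and the commuting graph on the set of order-p elements of A and the commuting graph on the set of order-p elements of B are both connected. Then the commuting graph Γ_p on the set of elements of G of order p is connected. -/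
open SimpleGraph

/-!
Fix `x ∈ A ∩ B` of order `p`. The elements `g` for which `g x g⁻¹` lies in the component of `x`
form a subgroup; by the connectivity hypotheses it contains `A` and `B`, so it is all of `G`.
Every element `y` of order `p` is within distance two of some conjugate of `x`: conjugate `x`
into a Sylow `p`-subgroup `Q` containing `y`; both then commute with a central element of
order `p` of `Q`.
-/

section CommGraph

variable {G H : Type*} [Group G] [Group H]

def commGraphMap (f : G →* H) (hf : Function.Injective f) {X : Set G} {Y : Set H}
    (hXY : Set.MapsTo f X Y) : commGraph X →g commGraph Y where
  toFun x := ⟨f x, hXY x.2⟩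
  map_rel' h := ⟨fun e => h.1 (Subtype.ext (hf (congrArg Subtype.val e))),
    by simp only [← map_mul, h.2]⟩

lemma commGraph_reachable_of_commute {X : Set G} {a b : X} (h : Commute (a : G) b) :
    (commGraph X).Reachable a b := by
  obtain rfl | hab := eq_or_ne a b
  · rfl
  · exact Adj.reachable ⟨hab, h⟩

variable {X : Set G} (hX : ∀ g : G, Set.MapsTo (MulAut.conj g) X X)
include hX

lemma commGraph_reachable_conj (g : G) {a b : X} (h : (commGraph X).Reachable a b) :
    (commGraph X).Reachable ⟨MulAut.conj g a, hX g a.2⟩ ⟨MulAut.conj g b, hX g b.2⟩ :=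
  h.map (commGraphMap (MulAut.conj g).toMonoidHom (MulEquiv.injective _) (hX g))

def conjReachableSubgroup (x : X) : Subgroup G where
  carrier := {g | (commGraph X).Reachable x ⟨MulAut.conj g x, hX g x.2⟩}
  one_mem' := by simp
  mul_mem' {g h} hg hh := hg.trans <| by
    simpa only [map_mul, MulAut.mul_apply] using commGraph_reachable_conj hX g hh
  inv_mem' {g} hg := by
    simpa only [Set.mem_ofPred_eq, map_inv, MulAut.inv_apply, MulEquiv.symm_apply_apply] using
      (commGraph_reachable_conj hX g⁻¹ hg).symm

lemma le_conjReachableSubgroup (C : Subgroup G) {x : X} (hxC : (x : G) ∈ C)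
    (hC : (commGraph {y : G | y ∈ C ∧ y ∈ X}).Connected) : C ≤ conjReachableSubgroup hX x :=
  fun g hg => (hC.preconnected ⟨x, hxC, x.2⟩
    ⟨MulAut.conj g x, by
      rw [MulAut.conj_apply]; exact C.mul_mem (C.mul_mem hg hxC) (C.inv_mem hg), hX g x.2⟩).map
    (commGraphMap (MonoidHom.id G) Function.injective_id fun _ hy => hy.2)

end CommGraph

section PGroup

variable {G : Type*} [Group G] {p : ℕ}

lemma mapsTo_conj_setOf_orderOf_eq (g : G) :
    Set.MapsTo (MulAut.conj g) {x : G | orderOf x = p} {x | orderOf x = p} :=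
  fun x hx => (MulEquiv.orderOf_eq _ x).trans hx

lemma exists_sylow_mem_of_orderOf_eq {x : G} (hx : orderOf x = p) : ∃ P : Sylow p G, x ∈ P := by
  obtain ⟨P, hP⟩ := (IsPGroup.of_card (G := Subgroup.zpowers x) (n := 1)
    (by rw [Nat.card_zpowers, hx, pow_one])).exists_le_sylow
  exact ⟨P, hP (Subgroup.mem_zpowers x)⟩

variable [Finite G] [Fact p.Prime]

lemma IsPGroup.exists_orderOf_eq_mem_center [Nontrivial G] (hG : IsPGroup p G) :
    ∃ z ∈ Subgroup.center G, orderOf z = p := by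
  obtain ⟨n, hn, hcard⟩ := (hG.to_subgroup _).nontrivial_iff_card.mp hG.center_nontrivial
  obtain ⟨z, hz⟩ := exists_prime_orderOf_dvd_card' (G := Subgroup.center G) p
    (hcard ▸ dvd_pow_self p hn.ne')
  exact ⟨z, z.2, by rwa [Subgroup.orderOf_coe]⟩

open scoped Pointwise in
lemma exists_commGraph_reachable_conj (x y : {x : G | orderOf x = p}) :
    ∃ g : G, (commGraph {x : G | orderOf x = p}).Reachable
      ⟨MulAut.conj g x, mapsTo_conj_setOf_orderOf_eq g x.2⟩ y := by
  obtain ⟨P, hxP⟩ := exists_sylow_mem_of_orderOf_eq x.2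
  obtain ⟨Q, hyQ⟩ := exists_sylow_mem_of_orderOf_eq y.2
  obtain ⟨g, rfl⟩ := MulAction.exists_smul_eq G P Q
  have hgxQ : MulAut.conj g x ∈ ((g • P : Sylow p G) : Subgroup G) := by
    rw [Sylow.coe_subgroup_smul]
    exact Subgroup.smul_mem_pointwise_smul _ _ _ hxP
  have hy1 : (y : G) ≠ 1 := fun h => (Fact.out : p.Prime).ne_one (by
    rw [← (y.2 : orderOf (y : G) = p), h, orderOf_one])
  have : Nontrivial (g • P : Sylow p G) :=
    (Subgroup.nontrivial_iff_exists_ne_one _).mpr ⟨y, hyQ, hy1⟩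
  obtain ⟨z, hz, hzp⟩ := (g • P).isPGroup'.exists_orderOf_eq_mem_center
  have hcomm : ∀ w ∈ ((g • P : Sylow p G) : Subgroup G), Commute w (z : G) :=
    fun w hw => congrArg Subtype.val (Subgroup.mem_center_iff.mp hz ⟨w, hw⟩)
  let z' : {x : G | orderOf x = p} := ⟨z, (Subgroup.orderOf_coe z).trans hzp⟩
  exact ⟨g, (commGraph_reachable_of_commute (b := z') (hcomm _ hgxQ)).trans
    (commGraph_reachable_of_commute (a := z') (hcomm _ hyQ).symm)⟩

end PGroup

/-- Let `G` be a finite group and `p` a prime. Suppose `A` and `B` are subgroups with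
`G = ⟨A, B⟩`, `A ∩ B` contains an element of order `p`, and the commuting graphs on the
order-`p` elements of `A` and of `B` are both connected. Then the commuting graph on the
set of elements of `G` of order `p` is connected. -/
theorem commGraph_connected_of_amalgam
    {G : Type*} [Group G] [Finite G] (p : ℕ) (hp : p.Prime)
    (A B : Subgroup G) (hgen : A ⊔ B = ⊤)
    (hmeet : ∃ x : G, x ∈ A ⊓ B ∧ orderOf x = p)
    (hA : (commGraph {x : G | x ∈ A ∧ orderOf x = p}).Connected)
    (hB : (commGraph {x : G | x ∈ B ∧ orderOf x = p}).Connected) :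
    (commGraph {x : G | orderOf x = p}).Connected := by
  have : Fact p.Prime := ⟨hp⟩
  obtain ⟨x, ⟨hxA, hxB⟩, hxp⟩ := hmeet
  have hX := mapsTo_conj_setOf_orderOf_eq (p := p) (G := G)
  have hconj : ⊤ ≤ conjReachableSubgroup hX ⟨x, hxp⟩ := hgen ▸
    sup_le (le_conjReachableSubgroup hX A hxA hA) (le_conjReachableSubgroup hX B hxB hB)
  refine (connected_iff_exists_forall_reachable _).mpr ⟨⟨x, hxp⟩, fun y => ?_⟩
  obtain ⟨g, hg⟩ := exists_commGraph_reachable_conj ⟨x, hxp⟩ y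
  exact (hconj (Subgroup.mem_top g)).trans hg
end

section
/- Let G be a finite group, x ∈ G an element of odd prime order, X = x^G its conjugacy class, and Γ_X the commuting graph on X. Suppose A and B are subgroups of G such that every element of A commutes with every element of B, x ∈ A, the product U = AB is a subgroup, and there exists g ∈ G with g⁻¹Ag ≤ B. Then ⟨U, g⟩ ≤ H_x; in particular, every element of the subgroup generated by U and g maps the connected component of x in Γ_X to itself under conjugation, and x and g⁻¹xg lie in the same connected component of Γ_X. -/
open SimpleGraph

/-!
The stabilizer `H_x` is a subgroup, and for a normal subset `X` an element `h` lies in it as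
soon as `h⁻¹ x h` lies in the component of `x`. Now `g⁻¹ x g ∈ B` commutes with `x ∈ A`, so it
is adjacent to `x`; for `a ∈ A` the conjugate `a⁻¹ x a ∈ A` commutes with `g⁻¹ x g ∈ B`, so it
is in the component too; and `B` centralizes `x`. Hence `A`, `B` and `g` all lie in `H_x`.
-/

section CommGraph

variable {G : Type*} [Group G] {X : Set G}

theorem conj_mem_setOf_isConj (x h : G) {y : G} (hy : IsConj x y) :
    h⁻¹ * y * h ∈ {z : G | IsConj x z} :=
  hy.trans (isConj_iff.mpr ⟨h⁻¹, by rw [inv_inv]⟩)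

theorem compSet_congr {x x' : G} (hx : x ∈ X) (hx' : x' ∈ X) (e : x = x') :
    compSet X x hx = compSet X x' hx' := by
  subst e; rfl

theorem self_mem_compSet {x : G} (hx : x ∈ X) : x ∈ compSet X x hx :=
  ⟨hx, Reachable.refl _⟩

theorem compSet_eq_of_mem {x y : G} (hx : x ∈ X) (hy : y ∈ X) (hxy : y ∈ compSet X x hx) :
    compSet X y hy = compSet X x hx := by
  obtain ⟨_, hr⟩ := hxy
  ext z
  exact ⟨fun ⟨hz, hyz⟩ => ⟨hz, hr.trans hyz⟩, fun ⟨hz, hxz⟩ => ⟨hz, hr.symm.trans hxz⟩⟩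

theorem mem_compSet_of_commute {x y z : G} (hx : x ∈ X) (hy : y ∈ compSet X x hx)
    (hz : z ∈ X) (hyz : Commute y z) : z ∈ compSet X x hx := by
  obtain ⟨hyX, hr⟩ := hy
  refine ⟨hz, hr.trans ?_⟩
  by_cases e : y = z
  · subst e; rfl
  · exact Adj.reachable ⟨fun h => e (congrArg Subtype.val h), hyz⟩

def commGraphConj (hX : ∀ h : G, ∀ y ∈ X, h⁻¹ * y * h ∈ X) (h : G) :
    commGraph X →g commGraph X where
  toFun y := ⟨h⁻¹ * y * h, hX h y y.2⟩
  map_rel' := by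
    rintro ⟨u, hu⟩ ⟨v, hv⟩ ⟨hne, huv⟩
    refine ⟨fun e => hne (Subtype.ext ?_), ?_⟩
    · simpa using congrArg Subtype.val e
    · change (h⁻¹ * u * h) * (h⁻¹ * v * h) = (h⁻¹ * v * h) * (h⁻¹ * u * h)
      simp only [mul_assoc, mul_inv_cancel_left]
      rw [← mul_assoc u, huv, mul_assoc]

variable (hX : ∀ h : G, ∀ y ∈ X, h⁻¹ * y * h ∈ X)
include hX

theorem conj_mem_compSet {x y : G} (hx : x ∈ X) (h : G) (hy : y ∈ compSet X x hx) :
    h⁻¹ * y * h ∈ compSet X (h⁻¹ * x * h) (hX h x hx) := by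
  obtain ⟨hyX, hr⟩ := hy
  exact ⟨hX h y hyX, hr.map (commGraphConj hX h)⟩

theorem image_conj_compSet {x : G} (hx : x ∈ X) (h : G) :
    (fun y => h⁻¹ * y * h) '' compSet X x hx = compSet X (h⁻¹ * x * h) (hX h x hx) := by
  refine Set.Subset.antisymm (Set.image_subset_iff.mpr fun y => conj_mem_compSet hX hx h) ?_
  intro z hz
  have hz' := conj_mem_compSet hX (hX h x hx) h⁻¹ hz
  rw [compSet_congr _ hx (by simp [mul_assoc])] at hz'
  exact ⟨h⁻¹⁻¹ * z * h⁻¹, hz', by simp [mul_assoc]⟩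

theorem mem_conjStab_iff {x : G} (hx : x ∈ X) (h : G) :
    h ∈ conjStab X x hx ↔ h⁻¹ * x * h ∈ compSet X x hx := by
  change _ '' _ = _ ↔ _
  rw [image_conj_compSet hX hx h]
  refine ⟨fun e => e ▸ self_mem_compSet (hX h x hx), compSet_eq_of_mem hx (hX h x hx)⟩

theorem mem_conjStab_of_commute {x : G} (hx : x ∈ X) {h : G} (hxh : Commute x h) :
    h ∈ conjStab X x hx := by
  rw [mem_conjStab_iff hX hx, mul_assoc, hxh.eq, inv_mul_cancel_left]
  exact self_mem_compSet hx

end CommGraph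

def conjStabSubgroup {G : Type*} [Group G] (X : Set G) (x : G) (hx : x ∈ X) : Subgroup G where
  carrier := conjStab X x hx
  one_mem' := by simp [conjStab]
  mul_mem' {a b} ha hb := by
    change _ '' _ = _ at ha hb ⊢
    conv_rhs => rw [← hb, ← ha, Set.image_image]
    simp [mul_assoc]
  inv_mem' {a} ha := by
    change _ '' _ = _ at ha ⊢
    conv_lhs => rw [← ha, Set.image_image]
    simp [mul_assoc]

/-- Let `x` be an element of odd prime order in a finite group `G`, `X = x^G` its conjugacy
class. Suppose `A` and `B` are commuting subgroups, `x ∈ A`, `U = AB` (= `A ⊔ B`), and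
`g ∈ G` satisfies `g⁻¹Ag ≤ B`. Then `⟨U, g⟩ ≤ H_x`, the stabilizer of the connected
component of `x` in the commuting graph on `X` under conjugation; in particular, `x` and
`g⁻¹ * x * g` lie in the same connected component of `Γ_X`. -/
theorem conjStab_ge_of_commuting_factorization
    {G : Type*} [Group G] (x : G)
    (A B : Subgroup G) (hcomm : ∀ a ∈ A, ∀ b ∈ B, a * b = b * a)
    (hxA : x ∈ A) (g : G) (hg : ∀ a ∈ A, g⁻¹ * a * g ∈ B) :
    (∀ h ∈ (A ⊔ B) ⊔ Subgroup.zpowers g,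
        h ∈ conjStab {y : G | IsConj x y} x (IsConj.refl x)) ∧
      (commGraph {y : G | IsConj x y}).Reachable ⟨x, IsConj.refl x⟩
        ⟨g⁻¹ * x * g, isConj_iff.mpr ⟨g⁻¹, by group⟩⟩ := by
  set X : Set G := {y : G | IsConj x y}
  have hX : ∀ h : G, ∀ y ∈ X, h⁻¹ * y * h ∈ X := fun h _ => conj_mem_setOf_isConj x h
  have hx : x ∈ X := IsConj.refl x
  have hgx : g⁻¹ * x * g ∈ compSet X x hx :=
    mem_compSet_of_commute hx (self_mem_compSet hx) (hX g x hx) (hcomm x hxA _ (hg x hxA))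
  have hA : A ≤ conjStabSubgroup X x hx := fun a ha => (mem_conjStab_iff hX hx a).mpr <|
    mem_compSet_of_commute hx hgx (hX a x hx)
      (hcomm _ (A.mul_mem (A.mul_mem (A.inv_mem ha) hxA) ha) _ (hg x hxA)).symm
  have hB : B ≤ conjStabSubgroup X x hx := fun b hb =>
    mem_conjStab_of_commute hX hx (hcomm x hxA b hb)
  have hg' : g ∈ conjStabSubgroup X x hx := (mem_conjStab_iff hX hx g).mpr hgx
  exact ⟨fun h hh => sup_le (sup_le hA hB) (Subgroup.zpowers_le.mpr hg') hh, hgx.2⟩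
end
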